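/- Let k ∈ ℕ and m ≥ 1 be an integer. There exist real coefficients α̂_0, α̂_1, …, α̂_m (depending on k, m) such that for all t ∈ ℝ, 2·T_{k+2m}(t) = ∑_{j=0}^{m} α̂_j · C^{m}_{k+2(m−j)}(t), and the last coefficient is α̂_m = (−1)^m · Γ(m) · Γ(k+m+1)/Γ(k+2m), where T_p denotes the Chebyshev polynomial of the first kind of degree p. -/

import Mathlib

/-!
For `λ = 1` the coefficients of `C_n^λ` are `(-1)^j (n-j choose j)`, so `C_n^1` is the Chebyshev
polynomial `U_n` of the second kind and `2 T_{n+2} = C_{n+2}^1 - C_n^1`. Comparing coefficients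
gives `(n + 2 + λ) C_{n+2}^λ = λ (C_{n+2}^{λ+1} - C_n^{λ+1})`, which rewrites an expansion of
`2 T_N` in `C_{N-2j}^λ`, `j ≤ i`, as one in `C_{N-2j}^{λ+1}`, `j ≤ i + 1`. Raising `λ` from `1`
to `m` proves the expansion, and at each step the last coefficient is multiplied by
`-λ / (N - λ)`; these factors telescope to `(-1)^m Γ(m) Γ(N - m + 1) / Γ(N)`.
-/

/-- The Gegenbauer polynomial `C_k^λ(z)` given by its explicit sum. -/
noncomputable def gegenbauer (k : ℕ) (l : ℝ) (z : ℝ) : ℝ :=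
  ∑ j ∈ Finset.range (k / 2 + 1),
    (-1 : ℝ) ^ j * (Real.Gamma ((k : ℝ) - j + l) /
      (Real.Gamma l * (Nat.factorial j) * (Nat.factorial (k - 2 * j)))) * (2 * z) ^ (k - 2 * j)

open Finset Polynomial.Chebyshev

noncomputable def gegenbauerCoeff (n j : ℕ) (l : ℝ) : ℝ :=
  (-1 : ℝ) ^ j * (Real.Gamma ((n : ℝ) - j + l) /
    (Real.Gamma l * (Nat.factorial j) * (Nat.factorial (n - 2 * j))))

theorem gegenbauer_eq_sum_coeff (n : ℕ) (l z : ℝ) :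
    gegenbauer n l z = ∑ j ∈ range (n / 2 + 1), gegenbauerCoeff n j l * (2 * z) ^ (n - 2 * j) :=
  rfl

theorem gegenbauerCoeff_one {n j : ℕ} (hj : 2 * j ≤ n) :
    gegenbauerCoeff n j 1 = (-1 : ℝ) ^ j * (n - j).choose j := by
  have hfac := Nat.choose_mul_factorial_mul_factorial (show j ≤ n - j by omega)
  rw [show n - j - j = n - 2 * j by omega] at hfac
  have hΓ : Real.Gamma ((n : ℝ) - j + 1) = (n - j).factorial := by
    rw [← Real.Gamma_nat_eq_factorial, Nat.cast_sub (by omega)]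
  rw [gegenbauerCoeff, hΓ, Real.Gamma_one, ← hfac]
  push_cast
  field_simp

theorem gegenbauerCoeff_param_add_one {n j : ℕ} {l : ℝ} (hl : 0 < l) (hj : j ≤ n) :
    gegenbauerCoeff n j (l + 1) = ((n - j + l) / l) * gegenbauerCoeff n j l := by
  have hx : (0 : ℝ) < n - j + l := by
    have : (j : ℝ) ≤ n := by exact_mod_cast hj
    linarith
  have hΓ := (Real.Gamma_pos_of_pos hl).ne'
  rw [gegenbauerCoeff, gegenbauerCoeff, ← add_assoc, Real.Gamma_add_one hx.ne',
    Real.Gamma_add_one hl.ne']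
  field_simp

theorem gegenbauerCoeff_add_two_succ {n j : ℕ} {l : ℝ} (hl : 0 < l) (hj : 2 * j ≤ n) :
    gegenbauerCoeff (n + 2) (j + 1) l = -((n - j + l) / (j + 1)) * gegenbauerCoeff n j l := by
  have hx : (0 : ℝ) < n - j + l := by
    have : (j : ℝ) ≤ n := by exact_mod_cast (show j ≤ n by omega)
    linarith
  rw [gegenbauerCoeff, gegenbauerCoeff, show n + 2 - 2 * (j + 1) = n - 2 * j by omega,
    Nat.factorial_succ, show ((n + 2 : ℕ) : ℝ) - (j + 1 : ℕ) + l = n - j + l + 1 by push_cast; ring,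
    Real.Gamma_add_one hx.ne']
  push_cast
  field_simp
  ring

theorem gegenbauer_add_two_sub_gegenbauer {l : ℝ} (hl : 0 < l) (n : ℕ) (z : ℝ) :
    gegenbauer (n + 2) (l + 1) z - gegenbauer n (l + 1) z =
      ((n + 2 + l) / l) * gegenbauer (n + 2) l z := by
  simp only [gegenbauer_eq_sum_coeff, mul_sum]
  rw [show (n + 2) / 2 + 1 = n / 2 + 1 + 1 by omega, sum_range_succ', sum_range_succ' _ (n / 2 + 1),
    add_sub_right_comm, ← sum_sub_distrib]
  congr 1
  · refine sum_congr rfl fun j hj => ?_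
    have hj : 2 * j ≤ n := by rw [mem_range] at hj; omega
    rw [show n + 2 - 2 * (j + 1) = n - 2 * j by omega, gegenbauerCoeff_param_add_one hl (by omega),
      gegenbauerCoeff_param_add_one hl (by omega), gegenbauerCoeff_add_two_succ hl hj]
    field_simp
    push_cast
    ring
  · rw [gegenbauerCoeff_param_add_one hl (by omega)]
    push_cast
    ring

theorem gegenbauer_one_eq_sum_choose {n N : ℕ} (hN : n / 2 < N) (z : ℝ) :
    gegenbauer n 1 z = ∑ j ∈ range N, (-1 : ℝ) ^ j * (n - j).choose j * (2 * z) ^ (n - 2 * j) := by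
  rw [gegenbauer_eq_sum_coeff]
  refine sum_subset_zero_on_sdiff (range_subset_range.2 hN) (fun j hj => ?_) (fun j hj => ?_)
  · rw [mem_sdiff, mem_range, mem_range] at hj
    rw [Nat.choose_eq_zero_of_lt (by omega), Nat.cast_zero, mul_zero, zero_mul]
  · rw [gegenbauerCoeff_one (by rw [mem_range] at hj; omega)]

theorem gegenbauer_one_add_two (n : ℕ) (z : ℝ) :
    gegenbauer (n + 2) 1 z = 2 * z * gegenbauer (n + 1) 1 z - gegenbauer n 1 z := by
  rw [gegenbauer_one_eq_sum_choose (N := n + 2) (by omega),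
    gegenbauer_one_eq_sum_choose (N := n + 2) (by omega),
    gegenbauer_one_eq_sum_choose (N := n + 1) (by omega), sum_range_succ',
    sum_range_succ' _ (n + 1), mul_add, mul_sum, add_sub_right_comm, ← sum_sub_distrib]
  congr 1
  · refine sum_congr rfl fun j hj => ?_
    rw [mem_range] at hj
    rw [show n + 2 - (j + 1) = n - j + 1 by omega, show n + 1 - (j + 1) = n - j by omega,
      show n + 2 - 2 * (j + 1) = n - 2 * j by omega, Nat.choose_succ_succ']
    rcases Nat.lt_or_ge n (2 * j + 1) with hj | hj
    · rw [Nat.choose_eq_zero_of_lt (by omega : n - j < j + 1)]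
      push_cast
      ring
    · rw [show n - 2 * j = n + 1 - 2 * (j + 1) + 1 by omega, pow_succ]
      push_cast
      ring
  · simp only [pow_zero, tsub_zero, Nat.choose_zero_right, Nat.cast_one, mul_one, mul_zero,
      pow_succ, one_mul]
    ring

theorem gegenbauer_one_eq_eval_U (n : ℕ) (z : ℝ) : gegenbauer n 1 z = (U ℝ n).eval z := by
  induction n using Nat.twoStepInduction with
  | zero => simp [gegenbauer, Real.Gamma_one]
  | one => simp [gegenbauer, Real.Gamma_one, one_add_one_eq_two]
  | more n ih₀ ih₁ =>
    rw [gegenbauer_one_add_two, ih₀, ih₁, show ((n + 2 : ℕ) : ℤ) = n + 2 by push_cast; ring,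
      U_add_two]
    simp only [Polynomial.eval_sub, Polynomial.eval_mul, Polynomial.eval_ofNat, Polynomial.eval_X]
    push_cast
    ring

theorem two_mul_eval_T_eq_gegenbauer_one_sub (n : ℕ) (z : ℝ) :
    2 * (T ℝ (n + 2 : ℕ)).eval z = gegenbauer (n + 2) 1 z - gegenbauer n 1 z := by
  rw [gegenbauer_one_eq_eval_U, gegenbauer_one_eq_eval_U, ← Polynomial.eval_sub, Nat.cast_add,
    Nat.cast_two, ← two_mul_T_eq_U_sub_U]
  simp

theorem sum_range_mul_sub_succ {R : Type*} [CommRing R] (γ D : ℕ → R) (n : ℕ) :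
    ∑ j ∈ range n, γ j * (D j - D (j + 1)) =
      ∑ j ∈ range (n + 1), ((if j < n then γ j else 0) - if j = 0 then 0 else γ (j - 1)) * D j := by
  simp only [sub_mul, mul_sub, sum_sub_distrib]
  rw [sum_range_succ, sum_range_succ' _ n]
  simp only [lt_irrefl, if_false, zero_mul, add_zero, Nat.add_one_ne_zero, add_tsub_cancel_right,
    if_true]
  congr 1
  exact sum_congr rfl fun j hj => by rw [if_pos (mem_range.1 hj)]

theorem exists_sum_gegenbauer_eq_sum_gegenbauer_param_add_one {N i : ℕ} (hi : 2 * i + 2 ≤ N) {l : ℝ}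
    (hl : 0 < l) (β : ℕ → ℝ) :
    ∃ β' : ℕ → ℝ,
      (∀ z, ∑ j ∈ range (i + 1), β j * gegenbauer (N - 2 * j) l z =
        ∑ j ∈ range (i + 2), β' j * gegenbauer (N - 2 * j) (l + 1) z) ∧
      β' (i + 1) = -(β i * l / ((N - 2 * i : ℕ) + l)) := by
  set γ : ℕ → ℝ := fun j => β j * l / ((N - 2 * j : ℕ) + l)
  refine ⟨fun j => (if j < i + 1 then γ j else 0) - if j = 0 then 0 else γ (j - 1), fun z => ?_, ?_⟩
  · rw [← sum_range_mul_sub_succ]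
    refine sum_congr rfl fun j hj => ?_
    have hj : 2 * j + 2 ≤ N := by rw [mem_range] at hj; omega
    have hstep := gegenbauer_add_two_sub_gegenbauer hl (N - 2 * (j + 1)) z
    rw [show N - 2 * (j + 1) + 2 = N - 2 * j by omega] at hstep
    have hcast : ((N - 2 * (j + 1) : ℕ) : ℝ) + 2 = (N - 2 * j : ℕ) := by
      rw [show N - 2 * j = N - 2 * (j + 1) + 2 by omega]
      push_cast
      ring
    rw [hstep, hcast]
    have : (0 : ℝ) < (N - 2 * j : ℕ) + l := by positivity
    simp only [γ]
    field_simp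
  · simp [γ]

theorem exists_two_mul_eval_T_eq_sum_gegenbauer {N i : ℕ} (hi : 1 ≤ i) (hN : 2 * i ≤ N) :
    ∃ β : ℕ → ℝ,
      (∀ z, 2 * (T ℝ N).eval z = ∑ j ∈ range (i + 1), β j * gegenbauer (N - 2 * j) i z) ∧
      β i = (-1) ^ i * Real.Gamma i * (Real.Gamma ((N : ℝ) - i + 1) / Real.Gamma N) := by
  have hΓ : Real.Gamma N ≠ 0 := (Real.Gamma_pos_of_pos (by norm_cast; omega)).ne'
  induction i, hi using Nat.le_induction with
  | base =>
    refine ⟨fun j => if j = 0 then 1 else -1, fun z => ?_, ?_⟩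
    · obtain ⟨n, rfl⟩ : ∃ n, N = n + 2 := ⟨N - 2, by omega⟩
      rw [two_mul_eval_T_eq_gegenbauer_one_sub]
      simp [sum_range_succ, sub_eq_add_neg]
    · simp [Real.Gamma_one, hΓ]
  | succ i hi ih =>
    obtain ⟨β, hβ, hβi⟩ := ih (by omega)
    obtain ⟨β', hβ', hβ'i⟩ :=
      exists_sum_gegenbauer_eq_sum_gegenbauer_param_add_one (N := N) (by omega)
        (show (0 : ℝ) < i by exact_mod_cast hi) β
    refine ⟨β', fun z => ?_, ?_⟩
    · rw [hβ, hβ', Nat.cast_succ]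
    · have hi₀ : (i : ℝ) ≠ 0 := by positivity
      have hNi : (N : ℝ) - i ≠ 0 := by
        have : (i : ℝ) + 1 ≤ N := by exact_mod_cast (show i + 1 ≤ N by omega)
        linarith
      have hcast : ((N - 2 * i : ℕ) : ℝ) + i = N - i := by
        rw [Nat.cast_sub (by omega)]
        push_cast
        ring
      rw [hβ'i, hβi, hcast, Nat.cast_succ, Real.Gamma_add_one hi₀, Real.Gamma_add_one hNi,
        show (N : ℝ) - (i + 1) + 1 = N - i by ring]
      field_simp
      ring

/-- `2 T_{k+2m}` expands in the `C^m` family with explicit last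
coefficient `α̂_m = (-1)^m Γ(m) Γ(k+m+1)/Γ(k+2m)`. -/
theorem stmt5 (k m : ℕ) (hm : 1 ≤ m) :
    ∃ α : ℕ → ℝ,
      (∀ t : ℝ, 2 * (Polynomial.Chebyshev.T ℝ (k + 2 * m : ℕ)).eval t =
        ∑ j ∈ Finset.range (m + 1), α j * gegenbauer (k + 2 * (m - j)) (m : ℝ) t) ∧
      α m = (-1 : ℝ) ^ m * Real.Gamma m *
        (Real.Gamma ((k : ℝ) + m + 1) / Real.Gamma ((k : ℝ) + 2 * m)) := by
  obtain ⟨β, hβ, hβm⟩ := exists_two_mul_eval_T_eq_sum_gegenbauer (N := k + 2 * m) hm (by omega)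
  refine ⟨β, fun t => ?_, ?_⟩
  · rw [hβ]
    refine sum_congr rfl fun j hj => ?_
    rw [show k + 2 * m - 2 * j = k + 2 * (m - j) by rw [mem_range] at hj; omega]
  · rw [hβm, show ((k + 2 * m : ℕ) : ℝ) - m + 1 = k + m + 1 by push_cast; ring]
    push_cast
    rfl
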